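/- There is no Singleton-optimal $(2,4)$-LRC over $GF(4)$ with dimension $k \geq 4$ satisfying $r \mid (k-1)$ and minimum distance $d > 4$ whose repair groups are pairwise disjoint of size 5. (Equivalently: if all code symbols of a quaternary linear code are partitioned into disjoint repair groups of size 5, each carrying a $[5,2,4]$ MDS local code, and the code has a residue code equivalent to a repetition code with all-nonzero codewords, then a contradiction arises because the $[5,2,4]$ MDS code over $GF(4)$ has no codeword of weight 5.) -/

import Mathlib

open scoped Classical

/-- Hamming weight of a vector. -/
noncomputable def wt {ι F : Type*} [Fintype ι] [Zero F] (x : ι → F) : ℕ :=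
  (Finset.univ.filter (fun i => x i ≠ 0)).card

/-- Minimum distance of a linear code (minimum weight of a nonzero codeword). -/
noncomputable def minDist {ι F : Type*} [Fintype ι] [Field F]
    (C : Submodule F (ι → F)) : ℕ :=
  sInf {w | ∃ c ∈ C, c ≠ 0 ∧ wt c = w}

/-- Restriction (puncturing) of a code to the coordinates in `S`. -/
noncomputable def puncture {ι F : Type*} [Fintype ι] [Field F]
    (C : Submodule F (ι → F)) (S : Finset ι) : Submodule F (↥S → F) :=
  C.map (LinearMap.funLeft F F (fun i : ↥S => (i : ι)))

/-- `C` is an `(r, δ)` locally repairable code with repair groups `R`: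
the groups cover all coordinates, each has size at most `r + δ - 1`, and
each local (punctured) code has minimum distance at least `δ`. -/
def IsLRC {ι F : Type*} [Fintype ι] [Field F]
    (C : Submodule F (ι → F)) (r δ : ℕ) (R : Finset (Finset ι)) : Prop :=
  (∀ i : ι, ∃ S ∈ R, i ∈ S) ∧
  (∀ S ∈ R, S.card ≤ r + δ - 1) ∧
  (∀ S ∈ R, ∀ c ∈ puncture C S, c ≠ 0 → δ ≤ wt c)

/-- No coordinate of the code is identically zero. -/
def NoZeroCoord {ι F : Type*} [Fintype ι] [Field F]
    (C : Submodule F (ι → F)) : Prop :=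
  ∀ i : ι, ∃ c ∈ C, c i ≠ 0

/-- The Singleton-type bound for `(r, δ)`-LRCs is attained with equality:
`d = n - k + 1 - (⌈k/r⌉ - 1)(δ - 1)`. -/
def SingletonOptimal {ι F : Type*} [Fintype ι] [Field F]
    (C : Submodule F (ι → F)) (r δ : ℕ) : Prop :=
  (minDist C : ℤ) = (Fintype.card ι : ℤ) - (Module.finrank F C : ℤ) + 1 -
    ((((Module.finrank F C + r - 1) / r : ℕ) : ℤ) - 1) * ((δ : ℤ) - 1)

/-- The dual code of `C` with respect to the standard bilinear form. -/
noncomputable def dualCode {ι F : Type*} [Fintype ι] [Field F]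
    (C : Submodule F (ι → F)) : Submodule F (ι → F) where
  carrier := {x | ∀ c ∈ C, ∑ i, x i * c i = 0}
  add_mem' := by
    intro a b ha hb c hc
    simp only [Set.mem_setOf_eq] at ha hb ⊢
    simp [Pi.add_apply, add_mul, Finset.sum_add_distrib, ha c hc, hb c hc]
  zero_mem' := by
    intro c hc
    simp
  smul_mem' := by
    intro t a ha c hc
    simp only [Set.mem_setOf_eq] at ha ⊢
    simp [Pi.smul_apply, smul_eq_mul, mul_assoc, ← Finset.mul_sum, ha c hc]

/-- Support of a (sub)code: coordinates where some codeword is nonzero. -/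
noncomputable def codeSupp {ι F : Type*} [Fintype ι] [Field F]
    (D : Submodule F (ι → F)) : Finset ι :=
  Finset.univ.filter (fun i => ∃ x ∈ D, x i ≠ 0)

/-!
Write `k = 2t + 1`; optimality says `d = n - 5t`. Each local code is a `[5, ≤ 2, ≥ 4]` code, so
`k ≤ 2|R|` and there are more than `t` repair groups. Take `t` of them, with union `A` (`|A| = 5t`),
and a group `S` outside them. A nonzero codeword vanishing on `A` has weight at least
`d = |Aᶜ|`, so it vanishes nowhere on `Aᶜ ⊇ S`. Hence the subcode `D` vanishing on `A` has dimension
at most `1` (evaluation at a point of `S` is injective on it), and `D ≠ 0` because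
`k ≤ ∑ dim (local codes on A) + dim D ≤ 2t + dim D`. Restricting a nonzero word of `D` to `S`
gives a local word of weight `5`; if the local code had dimension `2`, some other local word
would have the same ratio to it at two of the `5 > |GF(4)|` coordinates, and subtracting would
leave a nonzero local word of weight `≤ 3 < 4`. So every local code has dimension at most `1`,
and then `k ≤ t + dim D ≤ t + 1 < 2t + 1`.
-/

open Module

section Shortening

variable {ι F : Type*} [Field F]

def vanishingOn (C : Submodule F (ι → F)) (A : Finset ι) : Submodule F (ι → F) :=
  C ⊓ LinearMap.ker (LinearMap.funLeft F F ((↑) : A → ι))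

theorem mem_vanishingOn {C : Submodule F (ι → F)} {A : Finset ι} {c : ι → F} :
    c ∈ vanishingOn C A ↔ c ∈ C ∧ ∀ i ∈ A, c i = 0 := by
  simp [vanishingOn, funext_iff, LinearMap.funLeft]

theorem vanishingOn_empty (C : Submodule F (ι → F)) : vanishingOn C ∅ = C := by
  ext c
  simp [mem_vanishingOn]

theorem vanishingOn_vanishingOn [DecidableEq ι] (C : Submodule F (ι → F)) (A B : Finset ι) :
    vanishingOn (vanishingOn C A) B = vanishingOn C (B ∪ A) := by
  ext c
  simp only [mem_vanishingOn, Finset.mem_union]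
  grind

theorem finrank_eq_finrank_puncture_add [Fintype ι] (C : Submodule F (ι → F)) (A : Finset ι) :
    finrank F C = finrank F (puncture C A) + finrank F (vanishingOn C A) := by
  let f := (LinearMap.funLeft F F ((↑) : A → ι)).domRestrict C
  rw [← f.finrank_range_add_finrank_ker, LinearMap.range_domRestrict,
    ← Submodule.finrank_map_subtype_eq, LinearMap.ker_domRestrict, Submodule.map_comap_subtype]
  rfl

theorem finrank_le_sum_finrank_puncture_add [Fintype ι] [DecidableEq ι] (C : Submodule F (ι → F))
    (T : Finset (Finset ι)) :
    finrank F C ≤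
      ∑ S ∈ T, finrank F (puncture C S) + finrank F (vanishingOn C (T.biUnion id)) := by
  induction T using Finset.induction_on with
  | empty => rw [Finset.biUnion_empty, vanishingOn_empty]; simp
  | insert S T hS ih =>
    have hmono : finrank F (puncture (vanishingOn C (T.biUnion id)) S) ≤
        finrank F (puncture C S) :=
      Submodule.finrank_mono (Submodule.map_mono inf_le_left)
    have hsplit := finrank_eq_finrank_puncture_add (vanishingOn C (T.biUnion id)) S
    rw [vanishingOn_vanishingOn] at hsplit
    rw [Finset.sum_insert hS, Finset.biUnion_insert, id]
    omega

end Shortening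

section Weight

variable {ι F : Type*} [Fintype ι] [Field F]

theorem wt_add_card_le {x : ι → F} {B : Finset ι} (hB : ∀ i ∈ B, x i = 0) :
    wt x + B.card ≤ Fintype.card ι := by
  rw [wt, ← Finset.card_union_of_disjoint]
  · exact Finset.card_le_univ _
  · exact Finset.disjoint_left.mpr fun i hi hiB => (Finset.mem_filter.mp hi).2 (hB i hiB)

theorem minDist_le_wt {C : Submodule F (ι → F)} {c : ι → F} (hc : c ∈ C) (hc0 : c ≠ 0) :
    minDist C ≤ wt c :=
  Nat.sInf_le ⟨c, hc, hc0, rfl⟩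

theorem finrank_le_card_sub_of_lt_wt {L : Submodule F (ι → F)} {δ : ℕ}
    (hL : ∀ x ∈ L, x ≠ 0 → δ < wt x) : finrank F L ≤ Fintype.card ι - δ := by
  obtain ⟨B, -, hB⟩ :=
    Finset.exists_subset_card_eq (Nat.sub_le (Finset.univ : Finset ι).card δ)
  rw [Finset.card_univ] at hB
  have hinj : Function.Injective ((LinearMap.funLeft F F ((↑) : B → ι)).domRestrict L) := by
    rw [← LinearMap.ker_eq_bot, Submodule.eq_bot_iff]
    rintro ⟨x, hx⟩ hker
    by_contra hx0
    have hxB : ∀ i ∈ B, x i = 0 := fun i hi => congrFun hker ⟨i, hi⟩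
    have := hL x hx (by simpa using hx0)
    have := wt_add_card_le hxB
    omega
  simpa [hB] using LinearMap.finrank_le_finrank_of_injective hinj

theorem finrank_le_one_of_apply_ne_zero {L : Submodule F (ι → F)} (i : ι)
    (hL : ∀ z ∈ L, z ≠ 0 → z i ≠ 0) : finrank F L ≤ 1 := by
  have hinj : Function.Injective ((LinearMap.proj i : (ι → F) →ₗ[F] F).domRestrict L) := by
    rw [← LinearMap.ker_eq_bot, Submodule.eq_bot_iff]
    rintro ⟨z, hz⟩ hzi
    by_contra hz0
    exact hL z hz (by simpa using hz0) hzi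
  simpa using LinearMap.finrank_le_finrank_of_injective hinj

theorem exists_ne_zero_wt_add_two_le [Fintype F] [DecidableEq ι] {L : Submodule F (ι → F)}
    (hL : 2 ≤ finrank F L) (hcard : Fintype.card F < Fintype.card ι) {y : ι → F} (hy : y ∈ L)
    (hfull : ∀ i, y i ≠ 0) : ∃ z ∈ L, z ≠ 0 ∧ wt z + 2 ≤ Fintype.card ι := by
  obtain ⟨x, hxL, hxy⟩ : ∃ x ∈ L, x ∉ F ∙ y := by
    by_contra! h
    have := Submodule.finrank_mono (show L ≤ F ∙ y from h)
    have := finrank_span_le_card (R := F) ({y} : Set (ι → F))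
    rw [Set.toFinset_singleton, Finset.card_singleton] at this
    omega
  obtain ⟨i, j, hij, hratio⟩ := Fintype.exists_ne_map_eq_of_card_lt (fun i => x i / y i) hcard
  refine ⟨x - (x i / y i) • y, L.sub_mem hxL (L.smul_mem _ hy), ?_, ?_⟩
  · rw [sub_ne_zero]
    intro h
    exact hxy (Submodule.mem_span_singleton.2 ⟨_, h.symm⟩)
  · have hzero : ∀ l ∈ ({i, j} : Finset ι), (x - (x i / y i) • y) l = 0 := by
      simp only [Finset.mem_insert, Finset.mem_singleton]
      rintro l (rfl | rfl)
      · simp [div_mul_cancel₀ _ (hfull l)]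
      · simp [hratio, div_mul_cancel₀ _ (hfull l)]
    simpa [Finset.card_pair hij] using wt_add_card_le hzero

theorem apply_ne_zero_of_card_le_minDist_add [DecidableEq ι] {C : Submodule F (ι → F)}
    {A : Finset ι} {c : ι → F} (hc : c ∈ vanishingOn C A) (hc0 : c ≠ 0)
    (hA : Fintype.card ι ≤ minDist C + A.card) {i : ι} (hi : i ∉ A) : c i ≠ 0 := by
  intro hci
  rw [mem_vanishingOn] at hc
  have h1 := minDist_le_wt hc.1 hc0
  have h2 := wt_add_card_le (B := insert i A) ((Finset.forall_mem_insert _ _ _).2 ⟨hci, hc.2⟩)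
  rw [Finset.card_insert_of_notMem hi] at h2
  omega

end Weight

section LocalRepair

variable {ι F : Type*} [Fintype ι] [Field F] {C : Submodule F (ι → F)} {R : Finset (Finset ι)}

theorem IsLRC.finrank_puncture_le_two (hLRC : IsLRC C 2 4 R) (hsize : ∀ S ∈ R, S.card = 5)
    {S : Finset ι} (hS : S ∈ R) : finrank F (puncture C S) ≤ 2 := by
  simpa [hsize S hS] using
    finrank_le_card_sub_of_lt_wt (δ := 3) fun x hx hx0 => hLRC.2.2 S hS x hx hx0

theorem IsLRC.finrank_le_two_mul_card [DecidableEq ι] (hLRC : IsLRC C 2 4 R)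
    (hsize : ∀ S ∈ R, S.card = 5) : finrank F C ≤ 2 * R.card := by
  have hbot : vanishingOn C (R.biUnion id) = ⊥ := by
    refine (Submodule.eq_bot_iff _).2 fun c hc => funext fun i => ?_
    obtain ⟨S, hS, hiS⟩ := hLRC.1 i
    exact (mem_vanishingOn.1 hc).2 i (Finset.mem_biUnion.2 ⟨S, hS, hiS⟩)
  calc finrank F C ≤ ∑ S ∈ R, finrank F (puncture C S) := by
        have h := finrank_le_sum_finrank_puncture_add C R
        rwa [hbot, finrank_bot, add_zero] at h
    _ ≤ ∑ _S ∈ R, 2 := Finset.sum_le_sum fun S hS => hLRC.finrank_puncture_le_two hsize hS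
    _ = 2 * R.card := by rw [Finset.sum_const, smul_eq_mul, mul_comm]

theorem apply_ne_zero_of_mem_vanishingOn_biUnion [DecidableEq ι] (hsize : ∀ S ∈ R, S.card = 5)
    (hdisj : ∀ S ∈ R, ∀ T ∈ R, S ≠ T → Disjoint S T) {t : ℕ}
    (hd : minDist C + 5 * t = Fintype.card ι) {T : Finset (Finset ι)} (hTR : T ⊆ R)
    (hT : T.card = t) {S : Finset ι} (hS : S ∈ R) (hST : S ∉ T) {z : ι → F}
    (hz : z ∈ vanishingOn C (T.biUnion id)) (hz0 : z ≠ 0) {i : ι} (hi : i ∈ S) : z i ≠ 0 := by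
  have hcard : (T.biUnion id).card = 5 * t := by
    rw [Finset.card_biUnion (t := id) fun S hS S' hS' hne => hdisj S (hTR hS) S' (hTR hS') hne,
      Finset.sum_const_nat (f := fun S => (id S).card) fun S hS => hsize S (hTR hS), hT, mul_comm]
  refine apply_ne_zero_of_card_le_minDist_add hz hz0 (by omega) fun hiT => ?_
  obtain ⟨S', hS', hiS'⟩ := Finset.mem_biUnion.1 hiT
  exact Finset.disjoint_left.1
    (hdisj S hS S' (hTR hS') fun h => hST (h ▸ hS')) hi hiS'

theorem finrank_vanishingOn_biUnion_le_one [DecidableEq ι] (hsize : ∀ S ∈ R, S.card = 5)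
    (hdisj : ∀ S ∈ R, ∀ T ∈ R, S ≠ T → Disjoint S T) {t : ℕ}
    (hd : minDist C + 5 * t = Fintype.card ι) {T : Finset (Finset ι)} (hTR : T ⊆ R)
    (hT : T.card = t) {S : Finset ι} (hS : S ∈ R) (hST : S ∉ T) :
    finrank F (vanishingOn C (T.biUnion id)) ≤ 1 := by
  obtain ⟨i, hi⟩ : S.Nonempty := by rw [← Finset.card_pos, hsize S hS]; norm_num
  exact finrank_le_one_of_apply_ne_zero i fun z hz hz0 =>
    apply_ne_zero_of_mem_vanishingOn_biUnion hsize hdisj hd hTR hT hS hST hz hz0 hi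

theorem IsLRC.finrank_puncture_le_one [DecidableEq ι] [Fintype F] (hLRC : IsLRC C 2 4 R)
    (hsize : ∀ S ∈ R, S.card = 5) (hdisj : ∀ S ∈ R, ∀ T ∈ R, S ≠ T → Disjoint S T)
    (hF : Fintype.card F < 5) {t : ℕ} (hk : finrank F C = 2 * t + 1)
    (hd : minDist C + 5 * t = Fintype.card ι) {T : Finset (Finset ι)} (hTR : T ⊆ R)
    (hT : T.card = t) {S : Finset ι} (hS : S ∈ R) (hST : S ∉ T) :
    finrank F (puncture C S) ≤ 1 := by
  have hD : finrank F (vanishingOn C (T.biUnion id)) ≠ 0 := by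
    have hsplit := finrank_le_sum_finrank_puncture_add C T
    have hsum : ∑ S ∈ T, finrank F (puncture C S) ≤ T.card • 2 :=
      Finset.sum_le_card_nsmul _ _ _ fun S hS => hLRC.finrank_puncture_le_two hsize (hTR hS)
    rw [hT, smul_eq_mul] at hsum
    omega
  obtain ⟨z, hzD, hz0⟩ :=
    Submodule.exists_mem_ne_zero_of_ne_bot (mt Submodule.finrank_eq_zero.2 hD)
  by_contra! h2
  obtain ⟨w, hw, hw0, hwt⟩ := exists_ne_zero_wt_add_two_le (y := fun i : S => z i) h2
    (by simpa [hsize S hS] using hF) ⟨z, (mem_vanishingOn.1 hzD).1, rfl⟩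
    fun i => apply_ne_zero_of_mem_vanishingOn_biUnion hsize hdisj hd hTR hT hS hST hzD hz0 i.2
  have := hLRC.2.2 S hS w hw hw0
  simp only [Fintype.card_coe, hsize S hS] at hwt
  omega

end LocalRepair

theorem stmt_18_general (n : ℕ)
    (C : Submodule (GaloisField 2 2) (Fin n → GaloisField 2 2))
    (R : Finset (Finset (Fin n)))
    (hLRC : IsLRC C 2 4 R)
    (hopt : SingletonOptimal C 2 4)
    (hk : 4 ≤ Module.finrank (GaloisField 2 2) C)
    (hdiv : 2 ∣ (Module.finrank (GaloisField 2 2) C - 1))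
    (hsize : ∀ S ∈ R, S.card = 5)
    (hdisj : ∀ S ∈ R, ∀ T ∈ R, S ≠ T → Disjoint S T) : False := by
  let _ := Fintype.ofFinite (GaloisField 2 2)
  have hF : Fintype.card (GaloisField 2 2) < 5 := by
    rw [← Nat.card_eq_fintype_card, GaloisField.card 2 2 two_ne_zero]
    norm_num
  obtain ⟨t, ht⟩ := hdiv
  have hk' : finrank (GaloisField 2 2) C = 2 * t + 1 := by omega
  have hd : minDist C + 5 * t = Fintype.card (Fin n) := by
    have hceil : (finrank (GaloisField 2 2) C + 2 - 1) / 2 = t + 1 := by omega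
    have h := hopt
    rw [SingletonOptimal, hceil, hk'] at h
    push_cast at h
    omega
  have hR : t < R.card := by
    have := hLRC.finrank_le_two_mul_card hsize
    omega
  have hloc : ∀ S ∈ R, finrank (GaloisField 2 2) (puncture C S) ≤ 1 := fun S hS => by
    obtain ⟨T, hTR, hT⟩ := Finset.exists_subset_card_eq
      (show t ≤ (R.erase S).card by rw [Finset.card_erase_of_mem hS]; omega)
    exact hLRC.finrank_puncture_le_one hsize hdisj hF hk' hd (hTR.trans (R.erase_subset S)) hT hS
      fun h => Finset.notMem_erase S R (hTR h)
  obtain ⟨T, hTR, hT⟩ := Finset.exists_subset_card_eq hR.le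
  obtain ⟨S, hS, hST⟩ := Finset.exists_of_ssubset
    (Finset.ssubset_iff_subset_ne.2 ⟨hTR, fun h => by subst h; omega⟩)
  have hsplit := finrank_le_sum_finrank_puncture_add C T
  have hsum := Finset.sum_le_card_nsmul T _ 1 fun S hS => hloc S (hTR hS)
  have hD := finrank_vanishingOn_biUnion_le_one hsize hdisj hd hTR hT hS hST (C := C)
  rw [hT, smul_eq_mul] at hsum
  omega

theorem stmt_18 (n : ℕ)
    (C : Submodule (GaloisField 2 2) (Fin n → GaloisField 2 2))
    (R : Finset (Finset (Fin n)))
    (hLRC : IsLRC C 2 4 R) (hnz : NoZeroCoord C)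
    (hopt : SingletonOptimal C 2 4)
    (hk : 4 ≤ Module.finrank (GaloisField 2 2) C)
    (hdiv : 2 ∣ (Module.finrank (GaloisField 2 2) C - 1))
    (hd : 4 < minDist C)
    (hsize : ∀ S ∈ R, S.card = 5)
    (hdisj : ∀ S ∈ R, ∀ T ∈ R, S ≠ T → Disjoint S T) : False :=
  stmt_18_general n C R hLRC hopt hk hdiv hsize hdisj
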